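/- Let G be a locally finite graph and let x and x' be adjacent vertices of G. Then for every N ≥ 1, Z_N(x) ≤ Σ_{k=1}^{N} Z_k(x') · Z_{N−k}(x') + Z_{N+1}(x'), where Z_0(y) := 1 for every vertex y. (Hammersley's inequality, obtained by decomposing self-avoiding paths from x according to the time of their visit to x'.) -/

import Mathlib

namespace SAWGraph

/-- `Z_N(x)` : the number of self-avoiding paths of length `N` starting at `x`
in the graph `G`. -/
noncomputable def GZ {W : Type*} (G : SimpleGraph W) (N : ℕ) (x : W) : ℕ :=
  Nat.card {S : Fin (N + 1) → W // S 0 = x ∧ Function.Injective S ∧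
    ∀ n : Fin N, G.Adj (S n.castSucc) (S n.succ)}

/-!
A self-avoiding path `S` of length `N` from `x` either visits the neighbour `x'`, at a unique time
`k`, which is positive because `x ≠ x'`; or it avoids `x'`. In the first case `S` is recovered from
the pair (`S` read backwards from time `k` to `0`, `S` read from time `k` to `N`) of self-avoiding
paths from `x'` of lengths `k` and `N - k`. In the second case prepending `x'` to `S` gives a
self-avoiding path from `x'` of length `N + 1`. This is an injection into a set whose cardinality is
the right-hand side; local finiteness makes all the counts finite.
-/

section

variable {W : Type*} {G : SimpleGraph W}

variable (G) in
def SAPath (N : ℕ) (x : W) : Type _ :=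
  {S : Fin (N + 1) → W // S 0 = x ∧ Function.Injective S ∧
    ∀ n : Fin N, G.Adj (S n.castSucc) (S n.succ)}

namespace SAPath

variable {M N : ℕ} {x y : W}

lemma adj_of_val_add_one (S : SAPath G N x) {a b : Fin (N + 1)} (hab : a.val + 1 = b.val) :
    G.Adj (S.1 a) (S.1 b) := by
  obtain ⟨n, rfl, rfl⟩ : ∃ n : Fin N, n.castSucc = a ∧ n.succ = b :=
    ⟨⟨a, by omega⟩, Fin.ext rfl, Fin.ext (by simp [hab])⟩
  exact S.2.2.2 n

lemma pos_of_apply_ne (S : SAPath G N x) {k : Fin (N + 1)} (hk : S.1 k ≠ x) : 0 < (k : ℕ) :=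
  Nat.pos_of_ne_zero fun h0 => hk ((Fin.ext h0 : k = 0) ▸ S.2.1)

def reindex (S : SAPath G N x) (φ : Fin (M + 1) → Fin (N + 1)) (hφ : Function.Injective φ)
    (hstep : ∀ n : Fin M, (φ n.castSucc).val + 1 = (φ n.succ).val ∨
      (φ n.succ).val + 1 = (φ n.castSucc).val)
    (h0 : S.1 (φ 0) = y) : SAPath G M y :=
  ⟨S.1 ∘ φ, h0, S.2.2.1.comp hφ, fun n =>
    (hstep n).elim S.adj_of_val_add_one fun h => (S.adj_of_val_add_one h).symm⟩

def tail (S : SAPath G (N + 1) x) : SAPath G N (S.1 1) :=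
  S.reindex Fin.succ (Fin.succ_injective _) (fun _ => Or.inl rfl) rfl

def reverseInit (S : SAPath G N x) (k : Fin (N + 1)) (hk : S.1 k = y) : SAPath G k y :=
  S.reindex (fun j => ⟨k - j, by omega⟩)
    (fun i j h => Fin.ext (by have := i.isLt; have := j.isLt; simp only [Fin.ext_iff] at h; omega))
    (fun n => Or.inr (by simp only [Fin.val_succ, Fin.val_castSucc]; omega)) (by simpa using hk)

def dropInit (S : SAPath G N x) (k : Fin (N + 1)) (hk : S.1 k = y) : SAPath G (N - k) y :=
  S.reindex (fun j => ⟨k + j, by omega⟩)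
    (fun i j h => Fin.ext (by simp only [Fin.ext_iff] at h; omega))
    (fun n => Or.inl (by simp only [Fin.val_succ, Fin.val_castSucc]; omega)) (by simpa using hk)

def cons (S : SAPath G N x) (hadj : G.Adj y x) (hy : y ∉ Set.range S.1) :
    SAPath G (N + 1) y :=
  ⟨Fin.cons y S.1, Fin.cons_zero _ _, Fin.cons_injective_iff.mpr ⟨hy, S.2.2.1⟩,
    Fin.cases (by simpa [S.2.1] using hadj) fun n => by simpa using S.2.2.2 n⟩

lemma finite (hlf : ∀ v, (G.neighborSet v).Finite) : ∀ N x, Finite (SAPath G N x)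
  | 0, x => by
    have : Subsingleton (SAPath G 0 x) := ⟨fun S T => Subtype.ext (funext fun i => by
      rw [Fin.fin_one_eq_zero i, S.2.1, T.2.1])⟩
    infer_instance
  | N + 1, x => by
    have := (hlf x).to_subtype
    have := fun y => finite hlf N y
    refine Finite.of_injective (β := Σ y : G.neighborSet x, SAPath G N y)
      (fun S => ⟨⟨S.1 1, by simpa [S.2.1] using S.2.2.2 0⟩, S.tail⟩) fun S T h => ?_
    have htail : S.1 ∘ Fin.succ = T.1 ∘ Fin.succ := congrArg (fun p => p.2.1) h
    refine Subtype.ext (funext (Fin.cases (by rw [S.2.1, T.2.1]) fun i => ?_))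
    exact congrFun htail i

end SAPath

variable (G) in
abbrev Decomposition (N : ℕ) (y : W) : Type _ :=
  (Σ k : Finset.Icc 1 N, SAPath G k y × SAPath G (N - k) y) ⊕ SAPath G (N + 1) y

variable {N : ℕ} {x y : W}

def joinAt (k : ℕ) (f : Fin (k + 1) → W) (g : Fin (N - k + 1) → W) : Fin (N + 1) → W :=
  fun i => if i.val ≤ k then f ⟨k - i, by omega⟩ else g ⟨i - k, by omega⟩

def Decomposition.paste : Decomposition G N y → Fin (N + 1) → W
  | .inl ⟨k, T, T'⟩ => joinAt k T.1 T'.1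
  | .inr T => T.1 ∘ Fin.succ

open Classical in
noncomputable def decompose (hadj : G.Adj x y) (S : SAPath G N x) : Decomposition G N y :=
  if h : ∃ k, S.1 k = y then
    .inl ⟨⟨h.choose, Finset.mem_Icc.mpr
        ⟨S.pos_of_apply_ne (by rw [h.choose_spec]; exact hadj.ne.symm),
          Nat.lt_succ_iff.mp h.choose.isLt⟩⟩,
      S.reverseInit _ h.choose_spec, S.dropInit _ h.choose_spec⟩
  else .inr (S.cons hadj.symm h)

lemma joinAt_reverseInit_dropInit (S : SAPath G N x) (k : Fin (N + 1)) (hk : S.1 k = y) :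
    joinAt k (S.reverseInit k hk).1 (S.dropInit k hk).1 = S.1 := by
  funext i
  unfold joinAt
  split_ifs <;> exact congrArg S.1 (Fin.ext (by simp only; omega))

lemma paste_decompose (hadj : G.Adj x y) (S : SAPath G N x) : (decompose hadj S).paste = S.1 := by
  unfold decompose
  split
  next h => exact joinAt_reverseInit_dropInit S _ h.choose_spec
  next => rfl

lemma decompose_injective (hadj : G.Adj x y) :
    Function.Injective (decompose (N := N) hadj) := fun S T h =>
  Subtype.ext (by rw [← paste_decompose hadj S, h, paste_decompose])

lemma card_decomposition (hlf : ∀ v, (G.neighborSet v).Finite) :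
    Nat.card (Decomposition G N y) =
      ∑ k ∈ Finset.Icc 1 N, GZ G k y * GZ G (N - k) y + GZ G (N + 1) y := by
  have := SAPath.finite hlf
  rw [Decomposition, Nat.card_sum, Nat.card_sigma,
    ← Finset.sum_coe_sort (Finset.Icc 1 N) (fun k => GZ G k y * GZ G (N - k) y)]
  simp only [Nat.card_prod]
  rfl

end

theorem statement_6_general {W : Type*} (G : SimpleGraph W) (hlf : ∀ v, (G.neighborSet v).Finite)
    (x x' : W) (hadj : G.Adj x x') (N : ℕ) :
    GZ G N x ≤ (∑ k ∈ Finset.Icc 1 N, GZ G k x' * GZ G (N - k) x') + GZ G (N + 1) x' := by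
  have := SAPath.finite hlf
  calc GZ G N x = Nat.card (SAPath G N x) := rfl
    _ ≤ Nat.card (Decomposition G N x') :=
      Nat.card_le_card_of_injective _ (decompose_injective hadj)
    _ = _ := card_decomposition hlf

/-- Hammersley's inequality: for adjacent vertices `x, x'` of a locally finite
graph `G` and `N ≥ 1`,
`Z_N(x) ≤ ∑_{k=1}^{N} Z_k(x')·Z_{N−k}(x') + Z_{N+1}(x')` (here `Z_0(y) = 1`). -/
theorem statement_6 {W : Type*} (G : SimpleGraph W) (hlf : ∀ v, (G.neighborSet v).Finite)
    (x x' : W) (hadj : G.Adj x x') (N : ℕ) (hN : 1 ≤ N) :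
    GZ G N x ≤ (∑ k ∈ Finset.Icc 1 N, GZ G k x' * GZ G (N - k) x') + GZ G (N + 1) x' :=
  statement_6_general G hlf x x' hadj N

end SAWGraph
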